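/- Let K ⊂ ℂ be a nonempty compact set such that for every z ∈ K and every ε > 0 there are infinitely many pairwise distinct Euclidean circles contained in K that intersect the open disk of center z and radius ε. Then K cannot be written as a countable union of sets each of which is a Euclidean circle, a Cantor set, or a singleton. -/

import Mathlib

/-!
By the Baire category theorem on the compact set `K`, one piece `S n` of the decomposition
contains a nonempty relatively open part `K ∩ U` of `K`. Each circle of `K` meeting `U` contains
a nondegenerate arc inside `S n`. An arc is connected, so `S n` is neither a Cantor set nor a
point; and an arc is infinite, while two distinct circles meet in at most two points, so `S n`
is not a circle either, since infinitely many circles of `K` meet `U`.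
-/

open Set Metric MeasureTheory

/-- A Euclidean circle: `{z : ℂ | |z - a| = r}` for some center `a` and radius `r > 0`. -/
def EuclideanCircle (S : Set ℂ) : Prop :=
  ∃ (a : ℂ) (r : ℝ), 0 < r ∧ S = {z : ℂ | ‖z - a‖ = r}

/-- A Cantor set: a nonempty compact, perfect, totally disconnected subset of `ℂ`. -/
def IsCantorSet (S : Set ℂ) : Prop :=
  S.Nonempty ∧ IsCompact S ∧ Perfect S ∧ IsTotallyDisconnected S

/-- A compact set `E ⊆ ℂ` is conformally removable if every homeomorphism of `ℂ`
that is holomorphic off `E` is holomorphic everywhere. -/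
def ConformallyRemovable (E : Set ℂ) : Prop :=
  ∀ f : ℂ ≃ₜ ℂ, (∀ z ∈ Eᶜ, DifferentiableAt ℂ f z) → ∀ z : ℂ, DifferentiableAt ℂ f z

/-- A planar-normalized circle domain: an open connected set with compact complement,
each connected component of whose boundary is a Euclidean circle or a singleton. -/
def IsCircleDomain (Ω : Set ℂ) : Prop :=
  IsOpen Ω ∧ IsConnected Ω ∧ IsCompact Ωᶜ ∧
    ∀ z ∈ frontier Ω,
      EuclideanCircle (connectedComponentIn (frontier Ω) z) ∨
        ∃ w : ℂ, connectedComponentIn (frontier Ω) z = {w}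

theorem EuclideanGeometry.Sphere.inter_finite_of_finrank_eq_two {V P : Type*}
    [NormedAddCommGroup V] [InnerProductSpace ℝ V] [MetricSpace P] [NormedAddTorsor V P]
    (hd : Module.finrank ℝ V = 2) {s₁ s₂ : Sphere P} (hs : s₁ ≠ s₂) :
    ((s₁ : Set P) ∩ s₂).Finite := by
  have : FiniteDimensional ℝ V := Module.finite_of_finrank_pos (by omega)
  rcases ((s₁ : Set P) ∩ s₂).subsingleton_or_nontrivial with
    h | ⟨p₁, ⟨h₁₁, h₁₂⟩, p₂, ⟨h₂₁, h₂₂⟩, hp⟩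
  · exact h.finite
  · refine (Set.toFinite {p₁, p₂}).subset fun p ⟨hp₁, hp₂⟩ => ?_
    exact eq_of_mem_sphere_of_mem_sphere_of_finrank_eq_two hd hs hp h₁₁ h₂₁ hp₁ h₁₂ h₂₂ hp₂

theorem euclideanCircle_iff {C : Set ℂ} : EuclideanCircle C ↔ ∃ a r, 0 < r ∧ C = sphere a r := by
  simp only [EuclideanCircle, Set.ext_iff, mem_sphere_iff_norm, mem_ofPred_eq]

theorem EuclideanCircle.isClosed {C : Set ℂ} (hC : EuclideanCircle C) : IsClosed C := by
  obtain ⟨a, r, -, rfl⟩ := euclideanCircle_iff.1 hC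
  exact isClosed_sphere

theorem EuclideanCircle.inter_finite {C D : Set ℂ} (hC : EuclideanCircle C)
    (hD : EuclideanCircle D) (h : C ≠ D) : (C ∩ D).Finite := by
  obtain ⟨a, r, -, rfl⟩ := euclideanCircle_iff.1 hC
  obtain ⟨b, s, -, rfl⟩ := euclideanCircle_iff.1 hD
  exact EuclideanGeometry.Sphere.inter_finite_of_finrank_eq_two (P := ℂ)
    Complex.finrank_real_complex (s₁ := ⟨a, r⟩) (s₂ := ⟨b, s⟩) (by rintro ⟨⟩; exact h rfl)

open Complex in
theorem Complex.exists_isPreconnected_nontrivial_subset_sphere_inter {a : ℂ} {r : ℝ}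
    (hr : 0 < r) {U : Set ℂ} (hU : IsOpen U) (hne : (sphere a r ∩ U).Nonempty) :
    ∃ T ⊆ sphere a r ∩ U, IsPreconnected T ∧ T.Nontrivial := by
  obtain ⟨z, hz, hzU⟩ := hne
  rw [mem_sphere_iff_norm] at hz
  set γ : ℝ → ℂ := fun θ => a + (z - a) * exp (θ * I)
  have hγ : Continuous γ := by fun_prop
  have hγ_sphere : ∀ θ, γ θ ∈ sphere a r := fun θ => by
    simp [γ, mem_sphere_iff_norm, norm_exp_ofReal_mul_I, hz]
  obtain ⟨ε, hε, hεU⟩ := Metric.isOpen_iff.1 (hU.preimage hγ) 0 (by simpa [γ] using hzU)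
  set δ := min (ε / 2) (Real.pi / 2)
  have hδ : 0 < δ := by positivity
  refine ⟨γ '' Icc 0 δ, ?_, isPreconnected_Icc.image γ hγ.continuousOn, ?_⟩
  · rintro _ ⟨θ, ⟨hθ₀, hθδ⟩, rfl⟩
    refine ⟨hγ_sphere θ, hεU ?_⟩
    rw [mem_ball, Real.dist_0_eq_abs, abs_of_nonneg hθ₀]
    linarith [min_le_left (ε / 2) (Real.pi / 2)]
  · refine ⟨γ 0, mem_image_of_mem _ ⟨le_rfl, hδ.le⟩, γ δ, mem_image_of_mem _ ⟨hδ.le, le_rfl⟩,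
      fun h => ?_⟩
    have hza : z - a ≠ 0 := by rw [← norm_ne_zero_iff, hz]; exact hr.ne'
    have hexp : exp (δ * I) = 1 := by
      refine mul_left_cancel₀ hza ?_
      simp only [γ, ofReal_zero, zero_mul, exp_zero, mul_one, add_sub_cancel] at h
      linear_combination -h
    have hsin : Real.sin δ = 0 := by simpa using congrArg im hexp
    have hδπ : δ < Real.pi := by linarith [min_le_right (ε / 2) (Real.pi / 2), Real.pi_pos]
    exact (Real.sin_pos_of_pos_of_lt_pi hδ hδπ).ne' hsin

theorem EuclideanCircle.exists_isPreconnected_nontrivial_subset_inter {C U : Set ℂ}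
    (hC : EuclideanCircle C) (hU : IsOpen U) (hne : (C ∩ U).Nonempty) :
    ∃ T ⊆ C ∩ U, IsPreconnected T ∧ T.Nontrivial := by
  obtain ⟨a, r, hr, rfl⟩ := euclideanCircle_iff.1 hC
  exact Complex.exists_isPreconnected_nontrivial_subset_sphere_inter hr hU hne

theorem IsCompact.exists_isOpen_inter_subset_of_subset_iUnion {X ι : Type*} [TopologicalSpace X]
    [T2Space X] [Countable ι] {K : Set X} (hK : IsCompact K) (hne : K.Nonempty)
    {S : ι → Set X} (hS : ∀ i, IsClosed (S i)) (hKS : K ⊆ ⋃ i, S i) :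
    ∃ i U, IsOpen U ∧ (K ∩ U).Nonempty ∧ K ∩ U ⊆ S i := by
  have : CompactSpace K := isCompact_iff_compactSpace.1 hK
  have : Nonempty K := hne.to_subtype
  obtain ⟨i, x, hx⟩ := nonempty_interior_of_iUnion_of_closed
    (f := fun i => (Subtype.val ⁻¹' S i : Set K))
    (fun i => (hS i).preimage continuous_subtype_val)
    (eq_univ_of_forall fun x => by simpa using hKS x.2)
  obtain ⟨U, hU, hUS⟩ := isOpen_induced_iff.1 (isOpen_interior (s := Subtype.val ⁻¹' S i))
  rw [← hUS] at hx
  refine ⟨i, U, hU, ⟨x, x.2, hx⟩, fun y ⟨hyK, hyU⟩ => ?_⟩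
  have hy : (⟨y, hyK⟩ : K) ∈ interior (Subtype.val ⁻¹' S i) := hUS ▸ hyU
  exact interior_subset (s := Subtype.val ⁻¹' S i) hy

/-- A nonempty compact set each of whose points is an accumulation point of
infinitely many circles of the set cannot be a countable union of circles, Cantor sets
and singletons. -/
theorem not_countable_union_of_accumulating_circles (K : Set ℂ) (hne : K.Nonempty)
    (hK : IsCompact K)
    (hacc : ∀ z ∈ K, ∀ ε > 0,
      {C : Set ℂ | EuclideanCircle C ∧ C ⊆ K ∧ (C ∩ Metric.ball z ε).Nonempty}.Infinite) :
    ¬ ∃ S : ℕ → Set ℂ, K = (⋃ n, S n) ∧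
      ∀ n, EuclideanCircle (S n) ∨ IsCantorSet (S n) ∨ ∃ w : ℂ, S n = {w} := by
  rintro ⟨S, hKS, hS⟩
  have hS' : ∀ n, EuclideanCircle (S n) ∨ IsClosed (S n) ∧ IsTotallyDisconnected (S n) := by
    intro n
    rcases hS n with h | h | ⟨w, hw⟩
    exacts [.inl h, .inr ⟨h.2.1.isClosed, h.2.2.2⟩,
      .inr ⟨hw ▸ isClosed_singleton, hw ▸ isTotallyDisconnected_singleton⟩]
  have hclosed : ∀ n, IsClosed (S n) := fun n => (hS' n).elim EuclideanCircle.isClosed And.left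
  obtain ⟨n, U, hU, ⟨x, hxK, hxU⟩, hKU⟩ :=
    hK.exists_isOpen_inter_subset_of_subset_iUnion hne hclosed hKS.subset
  obtain ⟨ε, hε, hεU⟩ := Metric.isOpen_iff.1 hU x hxU
  have hcircles := hacc x hxK ε hε
  have harc : ∀ C, EuclideanCircle C → C ⊆ K → (C ∩ ball x ε).Nonempty →
      ∃ T ⊆ C ∩ S n, IsPreconnected T ∧ T.Nontrivial := by
    intro C hC hCK hCx
    obtain ⟨T, hT, hTc, hTn⟩ := hC.exists_isPreconnected_nontrivial_subset_inter hU
      (hCx.mono (inter_subset_inter_right C hεU))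
    exact ⟨T, fun z hz => ⟨(hT hz).1, hKU ⟨hCK (hT hz).1, (hT hz).2⟩⟩, hTc, hTn⟩
  rcases hS' n with hcirc | ⟨-, htd⟩
  · obtain ⟨C, ⟨hC, hCK, hCx⟩, hCS⟩ := (hcircles.sdiff (finite_singleton (S n))).nonempty
    obtain ⟨T, hT, hTc, hTn⟩ := harc C hC hCK hCx
    exact hTc.infinite_of_nontrivial hTn ((hC.inter_finite hcirc hCS).subset hT)
  · obtain ⟨C, hC, hCK, hCx⟩ := hcircles.nonempty
    obtain ⟨T, hT, hTc, hTn⟩ := harc C hC hCK hCx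
    exact hTn.not_subsingleton (htd T (hT.trans inter_subset_right) hTc)
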